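/- Let n be a nilpotent real Lie algebra with bracket λ, identified with ℝⁿ via a basis {e_i}, let D ∈ Der(n), and endow s_D = ℝf ⊕ n with the inner product for which |f| = 1, f ⊥ n and {e_i} is orthonormal. Then the Ricci operator Ric of (s_D, ⟨·,·⟩) satisfies: ⟨Ric f, f⟩ = −tr(S(D)²); ⟨Ric f, X⟩ = −tr(S(D) ∘ ad_n X) for all X ∈ n; and for all X, Y ∈ n, ⟨Ric X, Y⟩ = ⟨(Ric_λ + (1/2)[D, Dᵗ] − tr(D)·S(D)) X, Y⟩, where Ric_λ is the Ricci operator of the metric Lie algebra (n, λ, ⟨·,·⟩|_{n×n}), Dᵗ is the transpose of D and S(D) := (1/2)(D + Dᵗ). -/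

import Mathlib

open Finset Matrix

noncomputable section

section RicciToolkit

variable {V : Type*} [AddCommGroup V] [Module ℝ V] {ι : Type*} [Fintype ι] [DecidableEq ι]

/-- The inner product on `V` making the basis `b` orthonormal. -/
def bip (b : Module.Basis ι ℝ V) (x y : V) : ℝ := ∑ i, b.repr x i * b.repr y i

/-- The element `H` with `⟨H, X⟩ = tr (ad_μ X)` for the inner product of `b`. -/
def ricH (b : Module.Basis ι ℝ V) (μ : V →ₗ[ℝ] V →ₗ[ℝ] V) : V :=
  ∑ i, (LinearMap.trace ℝ V (μ (b i))) • b i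

/-- The Ricci curvature form of the metric Lie algebra `(V, μ, bip b)`. -/
def ricciForm (b : Module.Basis ι ℝ V) (μ : V →ₗ[ℝ] V →ₗ[ℝ] V) (X Y : V) : ℝ :=
  -(1/2) * ∑ i, ∑ j, bip b (μ X (b i)) (b j) * bip b (μ Y (b i)) (b j)
  + (1/4) * ∑ i, ∑ j, bip b (μ (b i) (b j)) X * bip b (μ (b i) (b j)) Y
  - (1/2) * (LinearMap.trace ℝ V ((μ X) ∘ₗ (μ Y)))
  - (1/2) * (bip b (μ (ricH b μ) X) Y + bip b (μ (ricH b μ) Y) X)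

/-- The Ricci operator of `(V, μ, bip b)` is negative definite. -/
def RicciNegDef (b : Module.Basis ι ℝ V) (μ : V →ₗ[ℝ] V →ₗ[ℝ] V) : Prop :=
  ∀ X : V, X ≠ 0 → ricciForm b μ X X < 0

/-- The bracket of the solvable extension `s_D = ℝ f ⊕ n`, `f = (1,0)`:
`[(a,X), (b,Y)] = (0, a • D Y - b • D X + μ X Y)`. -/
def sBr (μ : V →ₗ[ℝ] V →ₗ[ℝ] V) (D : V →ₗ[ℝ] V) :
    (ℝ × V) →ₗ[ℝ] (ℝ × V) →ₗ[ℝ] (ℝ × V) :=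
  (((LinearMap.lsmul ℝ V).compl₁₂ (LinearMap.fst ℝ ℝ V) (D ∘ₗ LinearMap.snd ℝ ℝ V))
    - ((LinearMap.lsmul ℝ V).compl₁₂ (LinearMap.fst ℝ ℝ V) (D ∘ₗ LinearMap.snd ℝ ℝ V)).flip
    + μ.compl₁₂ (LinearMap.snd ℝ ℝ V) (LinearMap.snd ℝ ℝ V)).compr₂ (LinearMap.inr ℝ ℝ V)

lemma sBr_apply (μ : V →ₗ[ℝ] V →ₗ[ℝ] V) (D : V →ₗ[ℝ] V) (p q : ℝ × V) :
    sBr μ D p q = (0, p.1 • D q.2 - q.1 • D p.2 + μ p.2 q.2) := by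
  simp [sBr, Prod.ext_iff]

end RicciToolkit

variable {m : ℕ}

/-- The bilinear bracket on `ℝ^m` with structure constants `c`. -/
def br (c : Fin m → Fin m → Fin m → ℝ) (x y : Fin m → ℝ) : Fin m → ℝ :=
  fun k => ∑ i, ∑ j, x i * y j * c i j k

/-- The bracket `br c` as a bundled bilinear map. -/
def brL (c : Fin m → Fin m → Fin m → ℝ) :
    (Fin m → ℝ) →ₗ[ℝ] (Fin m → ℝ) →ₗ[ℝ] (Fin m → ℝ) :=
  LinearMap.mk₂ ℝ (br c)
    (fun x x' y => by
      funext k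
      simp only [br, Pi.add_apply, add_mul, Finset.sum_add_distrib])
    (fun a x y => by
      funext k
      simp only [br, Pi.smul_apply, smul_eq_mul, Finset.mul_sum]
      exact Finset.sum_congr rfl fun i _ => Finset.sum_congr rfl fun j _ => by ring)
    (fun x y y' => by
      funext k
      simp only [br, Pi.add_apply, mul_add, add_mul, Finset.sum_add_distrib])
    (fun a x y => by
      funext k
      simp only [br, Pi.smul_apply, smul_eq_mul, Finset.mul_sum]
      exact Finset.sum_congr rfl fun i _ => Finset.sum_congr rfl fun j _ => by ring)

/-- Action of an invertible matrix `g` on brackets: `(g·μ)(x,y) = g μ(g⁻¹x, g⁻¹y)`. -/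
def actGL (g : (Matrix (Fin m) (Fin m) ℝ)ˣ) (c : Fin m → Fin m → Fin m → ℝ) :
    Fin m → Fin m → Fin m → ℝ :=
  fun i j k => ∑ p, ∑ q, ∑ l, ((↑g⁻¹ : Matrix (Fin m) (Fin m) ℝ) p i) *
    ((↑g⁻¹ : Matrix (Fin m) (Fin m) ℝ) q j) * ((↑g : Matrix (Fin m) (Fin m) ℝ) k l) * c p q l

/-- Action of the positive diagonal matrix `diagonal d` on brackets. -/
def actDiag (d : Fin m → ℝ) (c : Fin m → Fin m → Fin m → ℝ) :
    Fin m → Fin m → Fin m → ℝ :=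
  fun i j k => (d k / (d i * d j)) * c i j k

/-- The canonical inner product on `Λ²(ℝ^m)^* ⊗ ℝ^m`, in structure-constant coordinates
(the weight vectors `μ_ijk`, `i < j`, form an orthonormal basis). -/
def bip3 (c d : Fin m → Fin m → Fin m → ℝ) : ℝ :=
  (1/2) * ∑ i, ∑ j, ∑ k, c i j k * d i j k

/-- The `gl`-action of a matrix `E` on a bracket `c`:
`(E·μ)(x,y) = E μ(x,y) − μ(Ex,y) − μ(x,Ey)`. -/
def actE (E : Matrix (Fin m) (Fin m) ℝ) (c : Fin m → Fin m → Fin m → ℝ) :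
    Fin m → Fin m → Fin m → ℝ :=
  fun i j k => (∑ l, E k l * c i j l) - (∑ l, E l i * c l j k) - (∑ l, E l j * c i l k)

/-- The moment map: `mm c` is the symmetric matrix satisfying
`⟨mm c, E⟩ = ⟨E·c, c⟩ / |c|²` for every symmetric matrix `E`. -/
def mm (c : Fin m → Fin m → Fin m → ℝ) : Matrix (Fin m) (Fin m) ℝ :=
  Matrix.of fun a b => (1 / (2 * bip3 c c)) *
    bip3 (actE (Matrix.single a b 1 + Matrix.single b a 1) c) c

/-- The diagonal matrix `F_ij^k = E_kk - E_ii - E_jj`. -/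
def Fmat (i j k : Fin m) : Matrix (Fin m) (Fin m) ℝ :=
  Matrix.single k k 1 - Matrix.single i i 1 - Matrix.single j j 1

/-- `D` (as a matrix) is a derivation of the bracket `c`. -/
def IsDerivM (c : Fin m → Fin m → Fin m → ℝ) (D : Matrix (Fin m) (Fin m) ℝ) : Prop :=
  ∀ x y, D.mulVec (br c x y) = br c (D.mulVec x) y + br c x (D.mulVec y)

/-- Nilpotency of the bracket `br c`. -/
def IsNilpotentArr (c : Fin m → Fin m → Fin m → ℝ) : Prop :=
  ∃ N : ℕ, ∀ (f : Fin N → (Fin m → ℝ)) (y : Fin m → ℝ),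
    (List.ofFn f).foldr (fun x a => br c x a) y = 0

/-- `c` are the structure constants of a Lie bracket. -/
def IsLieArr (c : Fin m → Fin m → Fin m → ℝ) : Prop :=
  (∀ i j k, c j i k = - c i j k) ∧
    ∀ x y z, br c x (br c y z) + br c y (br c z x) + br c z (br c x y) = 0

/-- The canonical basis `{f} ∪ {e_i}` of `s_D = ℝ f ⊕ ℝ^m`. -/
def sBasis (m : ℕ) : Module.Basis (Unit ⊕ Fin m) ℝ (ℝ × (Fin m → ℝ)) :=
  (Module.Basis.singleton Unit ℝ).prod (Pi.basisFun ℝ (Fin m))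

/-- A derivation `D` of `n = (ℝ^m, c)` with `tr D > 0` is *strongly Ricci negative* if the
solvable extension `s_D = ℝ f ⊕ n` admits an inner product of negative Ricci curvature such
that `f ⊥ n` and `D` is symmetric with respect to its restriction to `n`. -/
def StronglyRicciNegative (c : Fin m → Fin m → Fin m → ℝ)
    (D : Matrix (Fin m) (Fin m) ℝ) : Prop :=
  0 < D.trace ∧
  ∃ b : Module.Basis (Unit ⊕ Fin m) ℝ (ℝ × (Fin m → ℝ)),
    (∀ x : Fin m → ℝ, bip b ((1 : ℝ), (0 : Fin m → ℝ)) ((0 : ℝ), x) = 0) ∧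
    (∀ x y : Fin m → ℝ,
      bip b ((0 : ℝ), D.mulVec x) ((0 : ℝ), y) = bip b ((0 : ℝ), x) ((0 : ℝ), D.mulVec y)) ∧
    RicciNegDef b (sBr (brL c) D.mulVecLin)

/-- The matrix of `ad_n X` for the bracket `c`, so that `(adMat c X).mulVec y = br c x y`. -/
def adMat (c : Fin m → Fin m → Fin m → ℝ) (X : Fin m → ℝ) : Matrix (Fin m) (Fin m) ℝ :=
  Matrix.of fun k j => ∑ i, X i * c i j k

/-- The matrix of the Ricci operator of `(ℝ^m, c)` with the canonical inner product. -/
def ricMat (c : Fin m → Fin m → Fin m → ℝ) : Matrix (Fin m) (Fin m) ℝ :=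
  Matrix.of fun a b =>
    ricciForm (Pi.basisFun ℝ (Fin m)) (brL c) (Pi.basisFun ℝ (Fin m) a) (Pi.basisFun ℝ (Fin m) b)

/-! Nilpotency makes every `ad_n X` traceless, so `H = (tr D) f` in `s_D` and `H = 0` in `n`.
Brackets of `s_D` have no `f`-component, so `f` enters the Ricci formula only through
`ad f = D` and `[X, f] = -D X`. In the orthonormal basis `{f} ∪ {e_i}` this adds `⟨D X, D Y⟩` to
the first sum and `2 ⟨Dᵗ X, Dᵗ Y⟩` to the second; the Killing form of `s_D` agrees with that of
`n` on `n × n`, while `B(f, f) = tr D²` and `B(f, X) = tr (D ∘ ad_n X)`. Symmetrising the traces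
produces the `S(D)` terms. -/

section Basis

variable {V : Type*} [AddCommGroup V] [Module ℝ V] {ι : Type*} [Fintype ι]
  (b : Module.Basis ι ℝ V)

lemma bip_comm (x y : V) : bip b x y = bip b y x := by
  simp only [bip, mul_comm]

lemma bip_add_left (x x' y : V) : bip b (x + x') y = bip b x y + bip b x' y := by
  simp only [bip, map_add, Finsupp.add_apply, add_mul, sum_add_distrib]

lemma bip_smul_left (t : ℝ) (x y : V) : bip b (t • x) y = t * bip b x y := by
  simp only [bip, map_smul, Finsupp.smul_apply, smul_eq_mul, mul_sum, mul_assoc]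

@[simp]
lemma bip_zero_left (y : V) : bip b 0 y = 0 := by
  simp [bip]

@[simp]
lemma bip_neg_left (x y : V) : bip b (-x) y = -bip b x y := by
  simp [bip]

lemma bip_add_right (x y y' : V) : bip b x (y + y') = bip b x y + bip b x y' := by
  rw [bip_comm, bip_add_left, bip_comm b y, bip_comm b y']

@[simp]
lemma bip_zero_right (x : V) : bip b x 0 = 0 := by
  rw [bip_comm, bip_zero_left]

@[simp]
lemma bip_neg_right (x y : V) : bip b x (-y) = -bip b x y := by
  rw [bip_comm, bip_neg_left, bip_comm]

lemma bip_smul_right (t : ℝ) (x y : V) : bip b x (t • y) = t * bip b x y := by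
  rw [bip_comm, bip_smul_left, bip_comm]

lemma ricciForm_comm (μ : V →ₗ[ℝ] V →ₗ[ℝ] V) (X Y : V) :
    ricciForm b μ X Y = ricciForm b μ Y X := by
  have := Module.Finite.of_basis b
  simp only [ricciForm, mul_comm (bip b (μ X _) _), mul_comm (bip b _ X),
    LinearMap.trace_comp_comm' (μ X), add_comm (bip b (μ _ X) Y)]

lemma ricciForm_add_left (μ : V →ₗ[ℝ] V →ₗ[ℝ] V) (X X' Y : V) :
    ricciForm b μ (X + X') Y = ricciForm b μ X Y + ricciForm b μ X' Y := by
  simp only [ricciForm, map_add, LinearMap.add_apply, LinearMap.add_comp, bip_add_left,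
    bip_add_right, add_mul, mul_add, sum_add_distrib]
  ring

lemma ricciForm_smul_left (μ : V →ₗ[ℝ] V →ₗ[ℝ] V) (t : ℝ) (X Y : V) :
    ricciForm b μ (t • X) Y = t * ricciForm b μ X Y := by
  simp only [ricciForm, map_smul, LinearMap.smul_apply, LinearMap.smul_comp, bip_smul_left,
    bip_smul_right, smul_eq_mul, mul_assoc, ← mul_sum]
  ring

def ricciBilin (μ : V →ₗ[ℝ] V →ₗ[ℝ] V) : V →ₗ[ℝ] V →ₗ[ℝ] ℝ :=
  LinearMap.mk₂ ℝ (ricciForm b μ) (ricciForm_add_left b μ) (ricciForm_smul_left b μ)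
    (fun X Y Y' => by
      rw [ricciForm_comm, ricciForm_add_left, ricciForm_comm, ricciForm_comm b μ Y'])
    (fun t X Y => by rw [ricciForm_comm, ricciForm_smul_left, ricciForm_comm]; rfl)

lemma ricH_eq_zero (μ : V →ₗ[ℝ] V →ₗ[ℝ] V) (hμ : ∀ x, LinearMap.trace ℝ V (μ x) = 0) :
    ricH b μ = 0 := by
  simp [ricH, hμ]

variable [DecidableEq ι]

lemma bip_basis_right (x : V) (j : ι) : bip b x (b j) = b.repr x j := by
  simp [bip, Finsupp.single_apply]

lemma sum_bip_basis_mul_bip_basis (x y : V) : ∑ j, bip b x (b j) * bip b y (b j) = bip b x y := by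
  simp only [bip_basis_right]
  rfl

lemma trace_eq_sum_repr (f : V →ₗ[ℝ] V) : LinearMap.trace ℝ V f = ∑ i, b.repr (f (b i)) i := by
  simp [LinearMap.trace_eq_matrix_trace ℝ b, Matrix.trace, LinearMap.toMatrix_apply]

end Basis

section Extension

variable {V : Type*} [AddCommGroup V] [Module ℝ V] {ι : Type*} (b : Module.Basis ι ℝ V)

def extBasis : Module.Basis (Unit ⊕ ι) ℝ (ℝ × V) :=
  (Module.Basis.singleton Unit ℝ).prod b

@[simp]
lemma extBasis_inl (u : Unit) : extBasis b (Sum.inl u) = (1, 0) := by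
  ext <;> simp [extBasis]

@[simp]
lemma extBasis_inr (i : ι) : extBasis b (Sum.inr i) = (0, b i) := by
  ext <;> simp [extBasis]

variable [Fintype ι]

lemma bip_extBasis (p q : ℝ × V) : bip (extBasis b) p q = p.1 * q.1 + bip b p.2 q.2 := by
  simp [bip, extBasis, Fintype.sum_sum_type, Module.Basis.prod_repr_inl,
    Module.Basis.prod_repr_inr]

variable [DecidableEq ι]

lemma trace_extBasis (F : (ℝ × V) →ₗ[ℝ] (ℝ × V)) :
    LinearMap.trace ℝ (ℝ × V) F = (F (1, 0)).1 + ∑ i, b.repr (F (0, b i)).2 i := by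
  simp [trace_eq_sum_repr (extBasis b), Fintype.sum_sum_type, extBasis,
    Module.Basis.prod_repr_inl, Module.Basis.prod_repr_inr]

end Extension

section SolvableExtension

variable {V : Type*} [AddCommGroup V] [Module ℝ V] (μ : V →ₗ[ℝ] V →ₗ[ℝ] V) (D : V →ₗ[ℝ] V)

lemma trace_sBr [Module.Free ℝ V] [Module.Finite ℝ V] (p : ℝ × V) :
    LinearMap.trace ℝ (ℝ × V) (sBr μ D p) =
      p.1 * LinearMap.trace ℝ V D + LinearMap.trace ℝ V (μ p.2) := by
  classical
  let b := Module.Free.chooseBasis ℝ V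
  simp [trace_extBasis b, sBr_apply, trace_eq_sum_repr b, mul_sum, sum_add_distrib]

variable {ι : Type*} [Fintype ι] (b : Module.Basis ι ℝ V)

lemma ricH_sBr (hμ : ∀ x, LinearMap.trace ℝ V (μ x) = 0) :
    ricH (extBasis b) (sBr μ D) = (LinearMap.trace ℝ V D, 0) := by
  have := Module.Free.of_basis b
  have := Module.Finite.of_basis b
  simp [ricH, Fintype.sum_sum_type, trace_sBr, hμ]

variable [DecidableEq ι]

lemma ricciForm_sBr_fst_fst (hμ : ∀ x, LinearMap.trace ℝ V (μ x) = 0) :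
    ricciForm (extBasis b) (sBr μ D) (1, 0) (1, 0) =
      -(1/2) * (∑ i, bip b (D (b i)) (D (b i)) + LinearMap.trace ℝ V (D ∘ₗ D)) := by
  rw [ricciForm, ricH_sBr μ D b hμ]
  simp only [one_div, sBr_apply, one_smul, map_zero, smul_zero, sub_zero, LinearMap.zero_apply,
    add_zero, bip_extBasis, zero_mul, zero_add, Fintype.sum_sum_type, univ_unique,
    PUnit.default_eq_unit, extBasis_inl, bip_zero_right, mul_zero, sum_const_zero, extBasis_inr,
    sum_bip_basis_mul_bip_basis, neg_mul, mul_one, trace_extBasis b, LinearMap.coe_comp,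
    Function.comp_apply, sub_self, trace_eq_sum_repr b]
  ring

lemma ricciForm_sBr_fst_snd (hμ : ∀ x, LinearMap.trace ℝ V (μ x) = 0) (x : V) :
    ricciForm (extBasis b) (sBr μ D) (1, 0) (0, x) =
      -(1/2) * (∑ i, bip b (D (b i)) (μ x (b i)) + LinearMap.trace ℝ V (D ∘ₗ μ x)) := by
  rw [ricciForm, ricH_sBr μ D b hμ]
  simp only [one_div, sBr_apply, one_smul, map_zero, smul_zero, sub_zero, LinearMap.zero_apply,
    add_zero, bip_extBasis, zero_mul, zero_add, zero_smul, zero_sub, Fintype.sum_sum_type,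
    univ_unique, PUnit.default_eq_unit, extBasis_inl, bip_zero_right, mul_zero, sum_const_zero,
    extBasis_inr, sum_bip_basis_mul_bip_basis, bip_neg_right, bip_zero_left, neg_zero, neg_mul,
    mul_one, trace_extBasis b, LinearMap.coe_comp, Function.comp_apply, map_neg, smul_neg,
    sub_self, trace_eq_sum_repr b]
  ring

lemma ricciForm_sBr_snd_snd (hμ : ∀ x, LinearMap.trace ℝ V (μ x) = 0) (x y : V) :
    ricciForm (extBasis b) (sBr μ D) (0, x) (0, y) =
      ricciForm b μ x y - (1/2) * bip b (D x) (D y)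
        + (1/2) * ∑ j, bip b (D (b j)) x * bip b (D (b j)) y
        - (1/2) * LinearMap.trace ℝ V D * (bip b (D x) y + bip b (D y) x) := by
  rw [ricciForm, ricH_sBr μ D b hμ]
  simp only [one_div, sBr_apply, zero_smul, zero_sub, bip_extBasis, zero_mul, zero_add,
    Fintype.sum_sum_type, univ_unique, PUnit.default_eq_unit, extBasis_inl, bip_zero_right,
    mul_zero, sum_const_zero, extBasis_inr, sum_bip_basis_mul_bip_basis, one_smul, map_zero,
    add_zero, bip_neg_right, bip_neg_left, neg_neg, sum_const, card_singleton, neg_zero, neg_mul,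
    smul_zero, mul_neg, sub_zero, sum_add_distrib, bip_zero_left, LinearMap.zero_apply,
    trace_extBasis b, LinearMap.coe_comp, Function.comp_apply, map_neg, smul_neg, sub_self,
    trace_eq_sum_repr b, bip_smul_left, ricciForm, ricH_eq_zero b μ hμ]
  ring

end SolvableExtension

section Coordinates

variable {ι : Type*} [Fintype ι]

lemma bip_basisFun (x y : ι → ℝ) : bip (Pi.basisFun ℝ ι) x y = x ⬝ᵥ y := by
  simp [bip, dotProduct]

lemma trace_mulVecLin (A : Matrix ι ι ℝ) : LinearMap.trace ℝ _ A.mulVecLin = A.trace := by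
  classical
  exact A.trace_toLin'_eq

variable [DecidableEq ι]

lemma ricciForm_basisFun_eq_mulVec_dotProduct (μ : (ι → ℝ) →ₗ[ℝ] (ι → ℝ) →ₗ[ℝ] (ι → ℝ))
    (x y : ι → ℝ) :
    ricciForm (Pi.basisFun ℝ ι) μ x y =
      (LinearMap.toMatrix₂' ℝ (ricciBilin (Pi.basisFun ℝ ι) μ) *ᵥ x) ⬝ᵥ y := by
  rw [ricciForm_comm, dotProduct_comm, ← Matrix.toLinearMap₂'_apply',
    Matrix.toLinearMap₂'_toMatrix']
  rfl

lemma sum_mulVec_single_dotProduct (A B : Matrix ι ι ℝ) :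
    ∑ i, (A *ᵥ Pi.single i 1) ⬝ᵥ (B *ᵥ Pi.single i 1) = (Aᵀ * B).trace := by
  simp [Matrix.trace, Matrix.mul_apply, dotProduct]

lemma sum_mulVec_single_dotProduct_mul (A : Matrix ι ι ℝ) (x y : ι → ℝ) :
    ∑ j, ((A *ᵥ Pi.single j 1) ⬝ᵥ x) * ((A *ᵥ Pi.single j 1) ⬝ᵥ y) = ((A * Aᵀ) *ᵥ x) ⬝ᵥ y := by
  have h (j : ι) (v : ι → ℝ) : (A *ᵥ Pi.single j 1) ⬝ᵥ v = (Aᵀ *ᵥ v) j := by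
    simp [dotProduct, mulVec, Pi.single_apply]
  calc ∑ j, ((A *ᵥ Pi.single j 1) ⬝ᵥ x) * ((A *ᵥ Pi.single j 1) ⬝ᵥ y)
      = (Aᵀ *ᵥ x) ⬝ᵥ (Aᵀ *ᵥ y) := by simp only [h]; rfl
    _ = ((A * Aᵀ) *ᵥ x) ⬝ᵥ y := by
      rw [dotProduct_mulVec, vecMul_transpose, mulVec_mulVec]

lemma trace_half_add_transpose_mul (A B : Matrix ι ι ℝ) :
    (((1/2 : ℝ) • (A + Aᵀ)) * B).trace = (1/2) * ((Aᵀ * B).trace + (A * B).trace) := by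
  simp only [one_div, smul_add, add_mul, Algebra.smul_mul_assoc, trace_add, trace_smul,
    smul_eq_mul]
  ring

lemma trace_half_add_transpose_sq (A : Matrix ι ι ℝ) :
    (((1/2 : ℝ) • (A + Aᵀ)) * ((1/2 : ℝ) • (A + Aᵀ))).trace =
      (1/2) * ((Aᵀ * A).trace + (A * A).trace) := by
  rw [Matrix.mul_smul, trace_smul, trace_half_add_transpose_mul, Matrix.mul_add, Matrix.mul_add,
    trace_add, trace_add, trace_mul_comm A Aᵀ, ← transpose_mul, trace_transpose, smul_eq_mul]
  ring

end Coordinates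

lemma foldr_br_replicate (c : Fin m → Fin m → Fin m → ℝ) (x y : Fin m → ℝ) (N : ℕ) :
    (List.replicate N x).foldr (fun x a => br c x a) y = (brL c x ^ N) y := by
  induction N with
  | zero => simp
  | succ n ih => rw [List.replicate_succ, List.foldr_cons, ih, pow_succ']; rfl

lemma IsNilpotentArr.trace_brL {c : Fin m → Fin m → Fin m → ℝ} (hc : IsNilpotentArr c)
    (x : Fin m → ℝ) :
    LinearMap.trace ℝ _ (brL c x) = 0 := by
  obtain ⟨N, hN⟩ := hc
  have hpow : brL c x ^ N = 0 := LinearMap.ext fun y => by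
    simpa [List.ofFn_const, foldr_br_replicate] using hN (fun _ => x) y
  exact (LinearMap.isNilpotent_trace_of_isNilpotent ⟨N, hpow⟩).eq_zero

section StructureConstants

variable (c : Fin m → Fin m → Fin m → ℝ)

lemma sBasis_eq_extBasis : sBasis m = extBasis (Pi.basisFun ℝ (Fin m)) := rfl

lemma ricMat_eq_toMatrix₂' :
    ricMat c = LinearMap.toMatrix₂' ℝ (ricciBilin (Pi.basisFun ℝ (Fin m)) (brL c)) := by
  ext a b
  simp [ricMat, ricciBilin]

lemma brL_apply (x y : Fin m → ℝ) : brL c x y = br c x y := rfl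

lemma brL_eq_mulVecLin_adMat (x : Fin m → ℝ) : brL c x = (adMat c x).mulVecLin := by
  refine LinearMap.ext fun y => funext fun k => ?_
  simp only [brL_apply, br, mulVecLin_apply, mulVec, dotProduct, adMat, of_apply, sum_mul]
  rw [sum_comm]
  exact sum_congr rfl fun _ _ => sum_congr rfl fun _ _ => by ring

end StructureConstants

theorem ricci_of_solvable_extension_general
    (m : ℕ) (c : Fin m → Fin m → Fin m → ℝ)
    (hnilp : IsNilpotentArr c)
    (D : Matrix (Fin m) (Fin m) ℝ) :
    (ricciForm (sBasis m) (sBr (brL c) D.mulVecLin)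
        ((1 : ℝ), (0 : Fin m → ℝ)) ((1 : ℝ), (0 : Fin m → ℝ)) =
      - Matrix.trace (((1/2 : ℝ) • (D + Dᵀ)) * ((1/2 : ℝ) • (D + Dᵀ)))) ∧
    (∀ X : Fin m → ℝ,
      ricciForm (sBasis m) (sBr (brL c) D.mulVecLin) ((1 : ℝ), (0 : Fin m → ℝ)) ((0 : ℝ), X) =
      - Matrix.trace (((1/2 : ℝ) • (D + Dᵀ)) * adMat c X)) ∧
    (∀ X Y : Fin m → ℝ,
      ricciForm (sBasis m) (sBr (brL c) D.mulVecLin) ((0 : ℝ), X) ((0 : ℝ), Y) =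
      ((ricMat c + (1/2 : ℝ) • (D * Dᵀ - Dᵀ * D)
        - D.trace • ((1/2 : ℝ) • (D + Dᵀ))).mulVec X) ⬝ᵥ Y) := by
  have hμ := hnilp.trace_brL
  rw [sBasis_eq_extBasis]
  refine ⟨?_, fun X => ?_, fun X Y => ?_⟩
  · rw [ricciForm_sBr_fst_fst _ _ _ hμ, trace_half_add_transpose_sq, ← mulVecLin_mul]
    simp only [Pi.basisFun_apply, mulVecLin_apply, bip_basisFun, sum_mulVec_single_dotProduct,
      trace_mulVecLin]
    ring
  · rw [ricciForm_sBr_fst_snd _ _ _ hμ, brL_eq_mulVecLin_adMat, trace_half_add_transpose_mul,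
      ← mulVecLin_mul]
    simp only [Pi.basisFun_apply, mulVecLin_apply, bip_basisFun, sum_mulVec_single_dotProduct,
      trace_mulVecLin]
    ring
  · have hDtD : ((Dᵀ * D) *ᵥ X) ⬝ᵥ Y = (D *ᵥ X) ⬝ᵥ (D *ᵥ Y) := by
      rw [← mulVec_mulVec, mulVec_transpose, ← dotProduct_mulVec]
    have hDt : (Dᵀ *ᵥ X) ⬝ᵥ Y = (D *ᵥ Y) ⬝ᵥ X := by
      rw [mulVec_transpose, ← dotProduct_mulVec, dotProduct_comm]
    rw [ricciForm_sBr_snd_snd _ _ _ hμ, ricciForm_basisFun_eq_mulVec_dotProduct,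
      ← ricMat_eq_toMatrix₂']
    simp only [Pi.basisFun_apply, mulVecLin_apply, bip_basisFun, sum_mulVec_single_dotProduct_mul,
      trace_mulVecLin, add_mulVec, sub_mulVec, smul_mulVec, add_dotProduct, sub_dotProduct,
      smul_dotProduct, smul_eq_mul, hDtD, hDt]
    ring

/-- The block form of the Ricci operator of `s_D = ℝ f ⊕ n` with the inner product for which
`|f| = 1`, `f ⊥ n` and `{e_i}` is orthonormal:
`⟨Ric f, f⟩ = -tr S(D)²`, `⟨Ric f, X⟩ = -tr (S(D) ∘ ad_n X)`, and on `n × n` it is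
`Ric_λ + ½[D, Dᵀ] - (tr D) S(D)`, where `S(D) = ½(D + Dᵀ)`. -/
theorem ricci_of_solvable_extension
    (m : ℕ) (c : Fin m → Fin m → Fin m → ℝ)
    (hlie : IsLieArr c) (hnilp : IsNilpotentArr c)
    (D : Matrix (Fin m) (Fin m) ℝ) (hder : IsDerivM c D) :
    (ricciForm (sBasis m) (sBr (brL c) D.mulVecLin)
        ((1 : ℝ), (0 : Fin m → ℝ)) ((1 : ℝ), (0 : Fin m → ℝ)) =
      - Matrix.trace (((1/2 : ℝ) • (D + Dᵀ)) * ((1/2 : ℝ) • (D + Dᵀ)))) ∧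
    (∀ X : Fin m → ℝ,
      ricciForm (sBasis m) (sBr (brL c) D.mulVecLin) ((1 : ℝ), (0 : Fin m → ℝ)) ((0 : ℝ), X) =
      - Matrix.trace (((1/2 : ℝ) • (D + Dᵀ)) * adMat c X)) ∧
    (∀ X Y : Fin m → ℝ,
      ricciForm (sBasis m) (sBr (brL c) D.mulVecLin) ((0 : ℝ), X) ((0 : ℝ), Y) =
      ((ricMat c + (1/2 : ℝ) • (D * Dᵀ - Dᵀ * D)
        - D.trace • ((1/2 : ℝ) • (D + Dᵀ))).mulVec X) ⬝ᵥ Y) :=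
  ricci_of_solvable_extension_general m c hnilp D

end
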